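/- Let X be a doubling metric space and Φ a dimension function. For all subsets E, F of X: min(lower Φ-dimension of E, lower Φ-dimension of F) ≤ lower Φ-dimension of E ∪ F ≤ max(lower Φ-dimension of E, upper Φ-dimension of F). -/

import Mathlib

open Set Metric Filter Topology
open scoped ENNReal

noncomputable section

/-- The least number of closed balls of radius `r` needed to cover `E`
(`∞` if there is no finite cover). -/
def coverNumber {X : Type*} [PseudoMetricSpace X] (r : ℝ) (E : Set X) : ℝ≥0∞ :=
  ⨅ (s : Finset X) (_ : E ⊆ ⋃ x ∈ s, closedBall x r), (s.card : ℝ≥0∞)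

/-- `Φ : (0,1) → [0,∞)` is a dimension function if `x ^ (1 + Φ x)` decreases to `0`
as `x` decreases to `0`. -/
def IsDimensionFunction (Φ : ℝ → ℝ) : Prop :=
  (∀ x ∈ Ioo (0:ℝ) 1, 0 ≤ Φ x) ∧
  (∀ x ∈ Ioo (0:ℝ) 1, ∀ y ∈ Ioo (0:ℝ) 1, x ≤ y → x ^ (1 + Φ x) ≤ y ^ (1 + Φ y)) ∧
  Tendsto (fun x : ℝ => x ^ (1 + Φ x)) (nhdsWithin 0 (Ioo 0 1)) (nhds 0)

/-- A metric space is doubling if there is `M ≥ 1` such that every closed ball of radius `R`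
can be covered by at most `M` closed balls of radius `R / 2`. -/
def IsDoublingSpace (X : Type*) [PseudoMetricSpace X] : Prop :=
  ∃ M : ℕ, 1 ≤ M ∧ ∀ (x : X) (R : ℝ), ∃ s : Finset X, s.card ≤ M ∧
    closedBall x R ⊆ ⋃ y ∈ s, closedBall y (R / 2)

/-- The upper `Φ`-dimension. -/
def upperPhiDim {X : Type*} [PseudoMetricSpace X] (Φ : ℝ → ℝ) (E : Set X) : ℝ :=
  sInf {α : ℝ | ∃ c₁ > (0:ℝ), ∃ c₂ > (0:ℝ), ∀ r R : ℝ,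
    0 < r → r ≤ R ^ (1 + Φ R) → R ^ (1 + Φ R) ≤ R → R < c₁ → ∀ z ∈ E,
      coverNumber r (closedBall z R ∩ E) ≤ ENNReal.ofReal (c₂ * (R / r) ^ α)}

/-- The lower `Φ`-dimension. -/
def lowerPhiDim {X : Type*} [PseudoMetricSpace X] (Φ : ℝ → ℝ) (E : Set X) : ℝ :=
  sSup {α : ℝ | ∃ c₁ > (0:ℝ), ∃ c₂ > (0:ℝ), ∀ r R : ℝ,
    0 < r → r ≤ R ^ (1 + Φ R) → R ^ (1 + Φ R) ≤ R → R < c₁ → ∀ z ∈ E,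
      ENNReal.ofReal (c₂ * (R / r) ^ α) ≤ coverNumber r (closedBall z R ∩ E)}

/-- The (upper) Assouad dimension: the upper `Φ`-dimension with `Φ ≡ 0`. -/
def assouadDim {X : Type*} [PseudoMetricSpace X] (E : Set X) : ℝ :=
  upperPhiDim (fun _ => 0) E

/-- The lower Assouad dimension: the lower `Φ`-dimension with `Φ ≡ 0`. -/
def lowerAssouadDim {X : Type*} [PseudoMetricSpace X] (E : Set X) : ℝ :=
  lowerPhiDim (fun _ => 0) E

/-- The upper `θ`-Assouad spectrum: the upper `Φ`-dimension with constant `Φ = 1/θ - 1`. -/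
def upperAssouadSpectrum {X : Type*} [PseudoMetricSpace X] (θ : ℝ) (E : Set X) : ℝ :=
  upperPhiDim (fun _ => 1 / θ - 1) E

/-- The lower `θ`-Assouad spectrum: the lower `Φ`-dimension with constant `Φ = 1/θ - 1`. -/
def lowerAssouadSpectrum {X : Type*} [PseudoMetricSpace X] (θ : ℝ) (E : Set X) : ℝ :=
  lowerPhiDim (fun _ => 1 / θ - 1) E

/-- The upper quasi-Assouad dimension, `lim_{θ → 1}` of the upper `θ`-Assouad spectrum;
since the upper spectrum is nondecreasing in `θ`, this limit is the supremum over
`θ ∈ (0,1)`. -/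
def quasiAssouadDim {X : Type*} [PseudoMetricSpace X] (E : Set X) : ℝ :=
  ⨆ θ : Ioo (0:ℝ) 1, upperAssouadSpectrum (θ : ℝ) E

/-- The lower quasi-Assouad dimension, `lim_{θ → 1}` of the lower `θ`-Assouad spectrum;
since the lower spectrum is nonincreasing in `θ`, this limit is the infimum over
`θ ∈ (0,1)`. -/
def quasiLowerAssouadDim {X : Type*} [PseudoMetricSpace X] (E : Set X) : ℝ :=
  ⨅ θ : Ioo (0:ℝ) 1, lowerAssouadSpectrum (θ : ℝ) E

/-- Upper box dimension `limsup_{r → 0} log N_r(E) / |log r|`. -/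
def upperBoxDim {X : Type*} [PseudoMetricSpace X] (E : Set X) : ℝ :=
  limsup (fun r : ℝ => Real.log (coverNumber r E).toReal / |Real.log r|)
    (nhdsWithin 0 (Ioo 0 1))

/-- Lower box dimension `liminf_{r → 0} log N_r(E) / |log r|`. -/
def lowerBoxDim {X : Type*} [PseudoMetricSpace X] (E : Set X) : ℝ :=
  liminf (fun r : ℝ => Real.log (coverNumber r E).toReal / |Real.log r|)
    (nhdsWithin 0 (Ioo 0 1))


/-!
A lower exponent common to `E` and `F` is one for `E ∪ F`, since every ball centred in `E ∪ F`
is centred in `E` or in `F`. Conversely, for `z ∈ E`,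
`N_r(B(z,R) ∩ (E ∪ F)) ≤ N_r(B(z,R) ∩ E) + N_r(B(z,R) ∩ F)`, and the last term is
`O((R/r)^β)` for any `β` above the upper `Φ`-dimension of `F`: the ball `B(z,R)` lies in a ball of
radius `2R` centred in `F`, and `(r, 2R)` is still admissible because `x ^ (1 + Φ x)` is increasing.
So if `α > β` is a lower exponent of `E ∪ F`, the `F`-term is absorbed and `α` is a lower exponent
of `E`. Doubling bounds the covering numbers of balls polynomially, which keeps the sets of
exponents bounded, so that `lowerPhiDim` and `upperPhiDim` are genuine suprema and infima rather
than the junk value `0` of `sSup` on unbounded sets.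
-/

section CoverNumber

variable {X : Type*} [PseudoMetricSpace X]

theorem coverNumber_le_card {r : ℝ} {S : Set X} {s : Finset X}
    (hs : S ⊆ ⋃ x ∈ s, closedBall x r) : coverNumber r S ≤ s.card :=
  iInf₂_le s hs

theorem coverNumber_mono {r : ℝ} {S T : Set X} (h : S ⊆ T) :
    coverNumber r S ≤ coverNumber r T :=
  le_iInf₂ fun s hs => iInf₂_le s (h.trans hs)

theorem coverNumber_anti_radius {r r' : ℝ} (h : r ≤ r') (S : Set X) :
    coverNumber r' S ≤ coverNumber r S :=
  le_iInf₂ fun s hs =>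
    iInf₂_le s (hs.trans (iUnion₂_mono fun _ _ => closedBall_subset_closedBall h))

theorem one_le_coverNumber {r : ℝ} {S : Set X} (h : S.Nonempty) : 1 ≤ coverNumber r S := by
  obtain ⟨z, hz⟩ := h
  refine le_iInf₂ fun s hs => ?_
  obtain ⟨x, hx, -⟩ := mem_iUnion₂.1 (hs hz)
  exact_mod_cast Finset.card_pos.2 ⟨x, hx⟩

theorem coverNumber_empty (r : ℝ) : coverNumber r (∅ : Set X) = 0 := by
  simpa using coverNumber_le_card (r := r) (s := (∅ : Finset X)) (empty_subset _)

theorem coverNumber_union_le (r : ℝ) (S T : Set X) :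
    coverNumber r (S ∪ T) ≤ coverNumber r S + coverNumber r T := by
  classical
  calc coverNumber r (S ∪ T)
      ≤ ⨅ (t : Finset X) (_ : T ⊆ ⋃ x ∈ t, closedBall x r)
          (s : Finset X) (_ : S ⊆ ⋃ x ∈ s, closedBall x r), (s.card + t.card : ℝ≥0∞) := by
        refine le_iInf₂ fun t ht => le_iInf₂ fun s hs => ?_
        calc coverNumber r (S ∪ T) ≤ (s ∪ t).card := coverNumber_le_card <| by
              rw [Finset.set_biUnion_union]; exact union_subset_union hs ht
          _ ≤ s.card + t.card := by exact_mod_cast Finset.card_union_le s t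
    _ = coverNumber r S + coverNumber r T := by
        simp only [coverNumber, ENNReal.iInf_add, ENNReal.add_iInf]

theorem coverNumber_biUnion_le (r : ℝ) (s : Finset X) (f : X → Set X) :
    coverNumber r (⋃ x ∈ s, f x) ≤ ∑ x ∈ s, coverNumber r (f x) := by
  classical
  induction s using Finset.induction_on with
  | empty => simp [coverNumber_empty]
  | insert a s ha ih =>
    rw [Finset.set_biUnion_insert, Finset.sum_insert ha]
    exact (coverNumber_union_le r _ _).trans (add_le_add_right ih _)

end CoverNumber

section Doubling

variable {X : Type*} [PseudoMetricSpace X] {M : ℕ}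

theorem coverNumber_closedBall_div_two_pow_le
    (hM : ∀ (x : X) (R : ℝ), ∃ s : Finset X, s.card ≤ M ∧
      closedBall x R ⊆ ⋃ y ∈ s, closedBall y (R / 2))
    (n : ℕ) (z : X) (R : ℝ) : coverNumber (R / 2 ^ n) (closedBall z R) ≤ M ^ n := by
  induction n generalizing z R with
  | zero => simpa using coverNumber_le_card (s := {z}) (r := R) (by simp)
  | succ n ih =>
    obtain ⟨s, hcard, hcover⟩ := hM z R
    calc coverNumber (R / 2 ^ (n + 1)) (closedBall z R)
        ≤ ∑ y ∈ s, coverNumber ((R / 2) / 2 ^ n) (closedBall y (R / 2)) := by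
          rw [div_div, ← pow_succ']
          exact (coverNumber_mono hcover).trans (coverNumber_biUnion_le _ _ _)
      _ ≤ ∑ _y ∈ s, (M : ℝ≥0∞) ^ n := Finset.sum_le_sum fun y _ => ih y (R / 2)
      _ ≤ (M : ℝ≥0∞) ^ (n + 1) := by
          rw [Finset.sum_const, nsmul_eq_mul, pow_succ']
          exact mul_le_mul_left (by exact_mod_cast hcard) _

theorem coverNumber_closedBall_le
    (hM : ∀ (x : X) (R : ℝ), ∃ s : Finset X, s.card ≤ M ∧
      closedBall x R ⊆ ⋃ y ∈ s, closedBall y (R / 2))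
    (z : X) {r R : ℝ} (hr : 0 < r) (hrR : r ≤ R) :
    coverNumber r (closedBall z R) ≤ ENNReal.ofReal (M * (R / r) ^ (M : ℝ)) := by
  obtain ⟨n, hn, hn'⟩ := exists_nat_pow_near ((one_le_div hr).2 hrR) one_lt_two
  have hscale : R / 2 ^ (n + 1) ≤ r := by
    rw [div_le_iff₀ (by positivity)]
    linarith [(div_lt_iff₀ hr).1 hn']
  have hpow : (M : ℝ) ^ n ≤ (R / r) ^ M :=
    calc (M : ℝ) ^ n ≤ ((2 : ℝ) ^ M) ^ n := by gcongr; exact_mod_cast Nat.lt_two_pow_self.le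
      _ = ((2 : ℝ) ^ n) ^ M := by rw [← pow_mul, ← pow_mul, mul_comm]
      _ ≤ (R / r) ^ M := by gcongr
  calc coverNumber r (closedBall z R) ≤ coverNumber (R / 2 ^ (n + 1)) (closedBall z R) :=
        coverNumber_anti_radius hscale _
    _ ≤ (M : ℝ≥0∞) ^ (n + 1) := coverNumber_closedBall_div_two_pow_le hM _ z R
    _ = ENNReal.ofReal (M * (M : ℝ) ^ n) := by
        rw [pow_succ', ← ENNReal.ofReal_natCast, ← ENNReal.ofReal_pow (Nat.cast_nonneg M),
          ENNReal.ofReal_mul (Nat.cast_nonneg M)]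
    _ ≤ ENNReal.ofReal (M * (R / r) ^ (M : ℝ)) := by
        rw [Real.rpow_natCast]; gcongr

end Doubling

namespace IsDimensionFunction

variable {Φ : ℝ → ℝ}

theorem rpow_le_self (hΦ : IsDimensionFunction Φ) {R : ℝ} (hR : R ∈ Ioo (0 : ℝ) 1) :
    R ^ (1 + Φ R) ≤ R := by
  simpa using Real.rpow_le_rpow_of_exponent_ge hR.1 hR.2.le
    (le_add_of_nonneg_right (a := (1 : ℝ)) (hΦ.1 R hR))

theorem eventually_exists_admissible (hΦ : IsDimensionFunction Φ) {c : ℝ} (hc : 0 < c) :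
    ∀ᶠ t in atTop, ∃ r R : ℝ, 0 < r ∧ r ≤ R ^ (1 + Φ R) ∧ R ^ (1 + Φ R) ≤ R ∧ R < c ∧
      R / r = t := by
  set R := min c 1 / 2 with hRdef
  have hRc : R < c := by linarith [min_le_left c 1, lt_min hc one_pos, hRdef]
  have hR : R ∈ Ioo (0 : ℝ) 1 := ⟨by positivity, by linarith [min_le_right c 1, hRdef]⟩
  have hρ : 0 < R ^ (1 + Φ R) := Real.rpow_pos_of_pos hR.1 _
  filter_upwards [eventually_ge_atTop (R / R ^ (1 + Φ R))] with t ht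
  have ht0 : 0 < t := (div_pos hR.1 hρ).trans_le ht
  refine ⟨R / t, R, div_pos hR.1 ht0, ?_, hΦ.rpow_le_self hR, hRc, div_div_cancel₀ hR.1.ne'⟩
  rw [div_le_iff₀ ht0]
  rw [div_le_iff₀ hρ] at ht
  linarith

end IsDimensionFunction

theorem le_of_eventually_mul_rpow_le {α β c c' : ℝ} (hc : 0 < c)
    (h : ∀ᶠ t in atTop, c * t ^ α ≤ c' * t ^ β) : α ≤ β := by
  by_contra! hβα
  obtain ⟨t, hle, ht, hbig⟩ := (h.and ((eventually_gt_atTop 0).and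
    ((tendsto_rpow_atTop (sub_pos.2 hβα)).eventually_gt_atTop (c' / c)))).exists
  have : c' * t ^ β < c * t ^ α := by
    rw [show α = (α - β) + β by ring, Real.rpow_add ht, ← mul_assoc]
    exact mul_lt_mul_of_pos_right ((div_lt_iff₀' hc).1 hbig) (Real.rpow_pos_of_pos ht _)
  linarith

theorem exists_ofReal_mul_rpow_le_of_le_add {α β c c' : ℝ} (hc : 0 < c) (hc' : 0 < c')
    (hα : 0 ≤ α) (hβα : β < α) :
    ∃ c₀ > (0 : ℝ), ∀ t > (0 : ℝ), ∀ A : ℝ≥0∞, 1 ≤ A →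
      ENNReal.ofReal (c * t ^ α) ≤ A + ENNReal.ofReal (c' * t ^ β) →
      ENNReal.ofReal (c₀ * t ^ α) ≤ A := by
  set K := (2 * c' / c) ^ (α / (α - β))
  have hK : 0 < K := by positivity
  refine ⟨min (c / 2) K⁻¹, by positivity, fun t ht A hA h => ?_⟩
  by_cases hsmall : c' * t ^ β ≤ c / 2 * t ^ α
  · have hhalf : ENNReal.ofReal (c / 2 * t ^ α) + ENNReal.ofReal (c / 2 * t ^ α) ≤
        A + ENNReal.ofReal (c / 2 * t ^ α) := by
      rw [← ENNReal.ofReal_add (by positivity) (by positivity), ← add_mul, add_halves]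
      exact h.trans (add_le_add_right (ENNReal.ofReal_le_ofReal hsmall) A)
    calc ENNReal.ofReal (min (c / 2) K⁻¹ * t ^ α) ≤ ENNReal.ofReal (c / 2 * t ^ α) := by
          gcongr; exact min_le_left _ _
      _ ≤ A := ENNReal.le_of_add_le_add_right ENNReal.ofReal_ne_top hhalf
  · -- otherwise `t` is bounded, and the trivial bound `1 ≤ A` suffices
    have hsplit : t ^ α = t ^ (α - β) * t ^ β := by
      rw [← Real.rpow_add ht, sub_add_cancel]
    have hdiff : t ^ (α - β) ≤ 2 * c' / c := by
      rw [le_div_iff₀ hc]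
      nlinarith [Real.rpow_pos_of_pos ht β, Real.rpow_pos_of_pos ht (α - β)]
    have htα : t ^ α ≤ K :=
      calc t ^ α = (t ^ (α - β)) ^ (α / (α - β)) := by
            rw [← Real.rpow_mul ht.le, mul_div_cancel₀ _ (sub_pos.2 hβα).ne']
        _ ≤ K := Real.rpow_le_rpow (by positivity) hdiff (div_nonneg hα (sub_pos.2 hβα).le)
    calc ENNReal.ofReal (min (c / 2) K⁻¹ * t ^ α) ≤ ENNReal.ofReal (K⁻¹ * K) := by
          gcongr; exact min_le_right _ _
      _ = 1 := by rw [inv_mul_cancel₀ hK.ne', ENNReal.ofReal_one]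
      _ ≤ A := hA

section PhiExponents

variable {X : Type*} [PseudoMetricSpace X] {Φ : ℝ → ℝ} {E F : Set X} {α β : ℝ}

def lowerPhiExponents (Φ : ℝ → ℝ) (E : Set X) : Set ℝ :=
  {α : ℝ | ∃ c₁ > (0:ℝ), ∃ c₂ > (0:ℝ), ∀ r R : ℝ,
    0 < r → r ≤ R ^ (1 + Φ R) → R ^ (1 + Φ R) ≤ R → R < c₁ → ∀ z ∈ E,
      ENNReal.ofReal (c₂ * (R / r) ^ α) ≤ coverNumber r (closedBall z R ∩ E)}

def upperPhiExponents (Φ : ℝ → ℝ) (E : Set X) : Set ℝ :=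
  {α : ℝ | ∃ c₁ > (0:ℝ), ∃ c₂ > (0:ℝ), ∀ r R : ℝ,
    0 < r → r ≤ R ^ (1 + Φ R) → R ^ (1 + Φ R) ≤ R → R < c₁ → ∀ z ∈ E,
      coverNumber r (closedBall z R ∩ E) ≤ ENNReal.ofReal (c₂ * (R / r) ^ α)}

theorem lowerPhiDim_eq_sSup : lowerPhiDim Φ E = sSup (lowerPhiExponents Φ E) := rfl

theorem upperPhiDim_eq_sInf : upperPhiDim Φ E = sInf (upperPhiExponents Φ E) := rfl

theorem zero_mem_lowerPhiExponents (Φ : ℝ → ℝ) (E : Set X) : 0 ∈ lowerPhiExponents Φ E := by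
  refine ⟨1, one_pos, 1, one_pos, fun r R hr h2 h3 _ z hz => ?_⟩
  have hzR : z ∈ closedBall z R ∩ E := ⟨mem_closedBall_self (hr.le.trans (h2.trans h3)), hz⟩
  simpa using one_le_coverNumber (r := r) ⟨z, hzR⟩

theorem lowerPhiDim_nonneg : 0 ≤ lowerPhiDim Φ E := by
  rw [lowerPhiDim_eq_sSup]
  exact Real.sSup_nonneg' ⟨0, zero_mem_lowerPhiExponents Φ E, le_rfl⟩

theorem mem_lowerPhiExponents_of_le (hα : α ∈ lowerPhiExponents Φ E) (hβα : β ≤ α) :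
    β ∈ lowerPhiExponents Φ E := by
  obtain ⟨c₁, hc₁, c₂, hc₂, h⟩ := hα
  refine ⟨c₁, hc₁, c₂, hc₂, fun r R hr h2 h3 h4 z hz => le_trans ?_ (h r R hr h2 h3 h4 z hz)⟩
  have hRr : 1 ≤ R / r := (one_le_div hr).2 (h2.trans h3)
  gcongr

theorem mem_lowerPhiExponents_of_lt_lowerPhiDim (h : α < lowerPhiDim Φ E) :
    α ∈ lowerPhiExponents Φ E :=
  let ⟨_, hβ, hαβ⟩ := exists_lt_of_lt_csSup ⟨0, zero_mem_lowerPhiExponents Φ E⟩ h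
  mem_lowerPhiExponents_of_le hβ hαβ.le

theorem IsDoublingSpace.upperPhiExponents_nonempty (hX : IsDoublingSpace X) :
    (upperPhiExponents Φ E).Nonempty := by
  obtain ⟨M, hM1, hM⟩ := hX
  refine ⟨M, show (M : ℝ) ∈ upperPhiExponents Φ E from ?_⟩
  refine ⟨1, one_pos, M, Nat.cast_pos.2 hM1, fun r R hr h2 h3 _ z _ => ?_⟩
  exact (coverNumber_mono inter_subset_left).trans
    (coverNumber_closedBall_le hM z hr (h2.trans h3))

theorem le_of_mem_lowerPhiExponents_of_mem_upperPhiExponents (hΦ : IsDimensionFunction Φ)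
    (hE : E.Nonempty) (hα : α ∈ lowerPhiExponents Φ E) (hβ : β ∈ upperPhiExponents Φ E) :
    α ≤ β := by
  obtain ⟨z, hz⟩ := hE
  obtain ⟨c₁, hc₁, c₂, hc₂, h⟩ := hα
  obtain ⟨c₁', hc₁', c₂', hc₂', h'⟩ := hβ
  refine le_of_eventually_mul_rpow_le hc₂ ?_ (c' := c₂')
  filter_upwards [hΦ.eventually_exists_admissible (lt_min hc₁ hc₁')]
    with t ⟨r, R, hr, h2, h3, h4, hRr⟩
  have hlow := h r R hr h2 h3 (h4.trans_le (min_le_left _ _)) z hz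
  have hup := h' r R hr h2 h3 (h4.trans_le (min_le_right _ _)) z hz
  have hRr0 : 0 ≤ R / r := div_nonneg (hr.le.trans (h2.trans h3)) hr.le
  rw [← hRr]
  exact (ENNReal.ofReal_le_ofReal_iff (by positivity)).1 (hlow.trans hup)

theorem bddAbove_lowerPhiExponents (hX : IsDoublingSpace X) (hΦ : IsDimensionFunction Φ)
    (hE : E.Nonempty) : BddAbove (lowerPhiExponents Φ E) :=
  let ⟨β, hβ⟩ := hX.upperPhiExponents_nonempty (Φ := Φ) (E := E)
  ⟨β, fun _ hα => le_of_mem_lowerPhiExponents_of_mem_upperPhiExponents hΦ hE hα hβ⟩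

theorem le_lowerPhiDim_of_mem (hX : IsDoublingSpace X) (hΦ : IsDimensionFunction Φ)
    (hE : E.Nonempty) (hα : α ∈ lowerPhiExponents Φ E) : α ≤ lowerPhiDim Φ E :=
  le_csSup (bddAbove_lowerPhiExponents hX hΦ hE) hα

theorem lowerPhiDim_le_upperPhiDim (hX : IsDoublingSpace X) (hΦ : IsDimensionFunction Φ)
    (hE : E.Nonempty) : lowerPhiDim Φ E ≤ upperPhiDim Φ E := by
  rw [lowerPhiDim_eq_sSup, upperPhiDim_eq_sInf]
  exact csSup_le ⟨0, zero_mem_lowerPhiExponents Φ E⟩ fun _ hα =>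
    le_csInf hX.upperPhiExponents_nonempty fun _ hβ =>
      le_of_mem_lowerPhiExponents_of_mem_upperPhiExponents hΦ hE hα hβ

theorem mem_lowerPhiExponents_union (hE : α ∈ lowerPhiExponents Φ E)
    (hF : α ∈ lowerPhiExponents Φ F) : α ∈ lowerPhiExponents Φ (E ∪ F) := by
  obtain ⟨c₁, hc₁, c₂, hc₂, h⟩ := hE
  obtain ⟨c₁', hc₁', c₂', hc₂', h'⟩ := hF
  refine ⟨min c₁ c₁', lt_min hc₁ hc₁', min c₂ c₂', lt_min hc₂ hc₂',
    fun r R hr h2 h3 h4 z hz => ?_⟩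
  have hRr : 0 ≤ R / r := div_nonneg (hr.le.trans (h2.trans h3)) hr.le
  rcases hz with hz | hz
  · calc ENNReal.ofReal (min c₂ c₂' * (R / r) ^ α) ≤ ENNReal.ofReal (c₂ * (R / r) ^ α) := by
          gcongr; exact min_le_left _ _
      _ ≤ coverNumber r (closedBall z R ∩ E) :=
          h r R hr h2 h3 (h4.trans_le (min_le_left _ _)) z hz
      _ ≤ coverNumber r (closedBall z R ∩ (E ∪ F)) :=
          coverNumber_mono (by gcongr; exact subset_union_left)
  · calc ENNReal.ofReal (min c₂ c₂' * (R / r) ^ α) ≤ ENNReal.ofReal (c₂' * (R / r) ^ α) := by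
          gcongr; exact min_le_right _ _
      _ ≤ coverNumber r (closedBall z R ∩ F) :=
          h' r R hr h2 h3 (h4.trans_le (min_le_right _ _)) z hz
      _ ≤ coverNumber r (closedBall z R ∩ (E ∪ F)) :=
          coverNumber_mono (by gcongr; exact subset_union_right)

theorem IsDimensionFunction.exists_coverNumber_inter_le (hΦ : IsDimensionFunction Φ)
    (hβ : β ∈ upperPhiExponents Φ F) :
    ∃ c₁ > (0 : ℝ), ∃ c₂ > (0 : ℝ), ∀ r R : ℝ,
      0 < r → r ≤ R ^ (1 + Φ R) → R ^ (1 + Φ R) ≤ R → R < c₁ → ∀ z : X,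
        coverNumber r (closedBall z R ∩ F) ≤ ENNReal.ofReal (c₂ * (R / r) ^ β) := by
  obtain ⟨c₁, hc₁, c₂, hc₂, h⟩ := hβ
  refine ⟨min (c₁ / 2) (1 / 2), by positivity, c₂ * 2 ^ β, by positivity,
    fun r R hr h2 h3 h4 z => ?_⟩
  have hR0 : 0 < R := hr.trans_le (h2.trans h3)
  obtain ⟨hRc₁, hR1⟩ := lt_min_iff.1 h4
  rcases (closedBall z R ∩ F).eq_empty_or_nonempty with hempty | ⟨w, hwz, hwF⟩
  · simp [hempty, coverNumber_empty]
  have hsub : closedBall z R ∩ F ⊆ closedBall w (2 * R) ∩ F :=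
    inter_subset_inter_left _ <| closedBall_subset_closedBall' <| by
      rw [mem_closedBall, dist_comm] at hwz; linarith
  have h2' : r ≤ (2 * R) ^ (1 + Φ (2 * R)) :=
    h2.trans (hΦ.2.1 R ⟨hR0, by linarith⟩ (2 * R) ⟨by linarith, by linarith⟩ (by linarith))
  calc coverNumber r (closedBall z R ∩ F) ≤ coverNumber r (closedBall w (2 * R) ∩ F) :=
        coverNumber_mono hsub
    _ ≤ ENNReal.ofReal (c₂ * (2 * R / r) ^ β) :=
        h r (2 * R) hr h2' (hΦ.rpow_le_self ⟨by linarith, by linarith⟩) (by linarith) w hwF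
    _ = ENNReal.ofReal (c₂ * 2 ^ β * (R / r) ^ β) := by
        rw [mul_div_assoc, Real.mul_rpow zero_le_two (div_pos hR0 hr).le, mul_assoc]

theorem mem_lowerPhiExponents_of_union (hΦ : IsDimensionFunction Φ)
    (hα : α ∈ lowerPhiExponents Φ (E ∪ F)) (hβ : β ∈ upperPhiExponents Φ F) (hα0 : 0 ≤ α)
    (hβα : β < α) : α ∈ lowerPhiExponents Φ E := by
  obtain ⟨c₁, hc₁, c₂, hc₂, h⟩ := hα
  obtain ⟨c₁', hc₁', c₂', hc₂', h'⟩ := hΦ.exists_coverNumber_inter_le hβ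
  obtain ⟨c₀, hc₀, habsorb⟩ := exists_ofReal_mul_rpow_le_of_le_add hc₂ hc₂' hα0 hβα
  refine ⟨min c₁ c₁', lt_min hc₁ hc₁', c₀, hc₀, fun r R hr h2 h3 h4 z hz => ?_⟩
  have hR0 : 0 < R := hr.trans_le (h2.trans h3)
  refine habsorb (R / r) (div_pos hR0 hr) _
    (one_le_coverNumber ⟨z, mem_closedBall_self hR0.le, hz⟩) ?_
  calc ENNReal.ofReal (c₂ * (R / r) ^ α) ≤ coverNumber r (closedBall z R ∩ (E ∪ F)) :=
        h r R hr h2 h3 (h4.trans_le (min_le_left _ _)) z (Or.inl hz)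
    _ ≤ coverNumber r (closedBall z R ∩ E) + coverNumber r (closedBall z R ∩ F) := by
        rw [inter_union_distrib_left]; exact coverNumber_union_le r _ _
    _ ≤ _ := add_le_add_right (h' r R hr h2 h3 (h4.trans_le (min_le_right _ _)) z) _

theorem min_lowerPhiDim_le_lowerPhiDim_union (hX : IsDoublingSpace X)
    (hΦ : IsDimensionFunction Φ) (hEF : (E ∪ F).Nonempty) :
    min (lowerPhiDim Φ E) (lowerPhiDim Φ F) ≤ lowerPhiDim Φ (E ∪ F) :=
  le_of_forall_lt_imp_le_of_dense fun _ hγ => le_lowerPhiDim_of_mem hX hΦ hEF <|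
    mem_lowerPhiExponents_union
      (mem_lowerPhiExponents_of_lt_lowerPhiDim (hγ.trans_le (min_le_left _ _)))
      (mem_lowerPhiExponents_of_lt_lowerPhiDim (hγ.trans_le (min_le_right _ _)))

theorem lowerPhiDim_union_le_max (hX : IsDoublingSpace X) (hΦ : IsDimensionFunction Φ)
    (hEF : (E ∪ F).Nonempty) :
    lowerPhiDim Φ (E ∪ F) ≤ max (lowerPhiDim Φ E) (upperPhiDim Φ F) := by
  rcases E.eq_empty_or_nonempty with rfl | hE
  · rw [empty_union] at hEF ⊢
    exact (lowerPhiDim_le_upperPhiDim hX hΦ hEF).trans (le_max_right _ _)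
  refine csSup_le ⟨0, zero_mem_lowerPhiExponents Φ _⟩ fun α hα => ?_
  by_contra! hlt
  obtain ⟨hEα, hFα⟩ := max_lt_iff.1 hlt
  obtain ⟨β, hβ, hβα⟩ := exists_lt_of_csInf_lt hX.upperPhiExponents_nonempty hFα
  have hαE := mem_lowerPhiExponents_of_union hΦ hα hβ (lowerPhiDim_nonneg.trans hEα.le) hβα
  exact hEα.not_ge (le_lowerPhiDim_of_mem hX hΦ hE hαE)

end PhiExponents

/-- Bounds for the lower `Φ`-dimension of a union. -/
theorem lowerPhiDim_union_bounds {X : Type*} [MetricSpace X] (hX : IsDoublingSpace X)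
    (Φ : ℝ → ℝ) (hΦ : IsDimensionFunction Φ) (E F : Set X) :
    min (lowerPhiDim Φ E) (lowerPhiDim Φ F) ≤ lowerPhiDim Φ (E ∪ F) ∧
    lowerPhiDim Φ (E ∪ F) ≤ max (lowerPhiDim Φ E) (upperPhiDim Φ F) := by
  rcases (E ∪ F).eq_empty_or_nonempty with hEF | hEF
  · obtain ⟨rfl, rfl⟩ := union_empty_iff.1 hEF
    simp
  exact ⟨min_lowerPhiDim_le_lowerPhiDim_union hX hΦ hEF, lowerPhiDim_union_le_max hX hΦ hEF⟩

end
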